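/- Let n ≥ 1 be an integer, k ≥ 0, and D > 0 with D < π/√k when k > 0. Define tn_k(s) = √k·tan(√k·s) for k > 0 and tn_k ≡ 0 for k = 0. Let Ṽ : (−D/2, D/2) → ℝ be differentiable, λ̄₁ ∈ ℝ, and let φ : (−D/2, D/2) → ℝ be positive and three times differentiable satisfying the eigenvalue equation −φ'' + (n−1)·tn_k·φ' + Ṽφ = λ̄₁φ on (−D/2, D/2). Then Ψ := φ'/φ satisfies, for every s ∈ (−D/2, D/2), Ψ''(s) + 2Ψ'(s)Ψ(s) − tn_k(s)·[(n+1)Ψ'(s) + 2λ̄₁ + 2Ψ(s)² − 2Ṽ(s)] − Ṽ'(s) − (n−1)·(k − tn_k(s)²)·Ψ(s) = 0. -/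

import Mathlib

/-!
Dividing the eigenvalue equation by `φ` turns it into the first-order Riccati equation
`Ψ' = (n - 1) tn_k Ψ + Ṽ - λ̄₁ - Ψ²` for `Ψ = φ'/φ`. Differentiating this once more, with
`tn_k' = k + tn_k²`, and substituting it back, the left-hand side of the identity becomes
`2 tn_k` times the Riccati equation, hence vanishes.
-/

/-- `tn_k(s) = √k · tan(√k · s)` for `k > 0`, and `tn_k ≡ 0` for `k ≤ 0`. -/
noncomputable def tnk (k s : ℝ) : ℝ :=
  if 0 < k then Real.sqrt k * Real.tan (Real.sqrt k * s) else 0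

open Real Set Filter Topology

theorem hasDerivAt_tnk {k s : ℝ} (hk : 0 ≤ k) (hcos : cos (√k * s) ≠ 0) :
    HasDerivAt (tnk k) (k + tnk k s ^ 2) s := by
  rcases hk.eq_or_lt with rfl | hk
  · have htnk : tnk 0 = fun _ => 0 := funext fun x => if_neg (lt_irrefl 0)
    simpa [htnk] using hasDerivAt_const s (0 : ℝ)
  have htnk : tnk k = fun x => √k * tan (√k * x) := funext fun x => if_pos hk
  have htan := ((hasDerivAt_tan hcos).comp s ((hasDerivAt_id s).const_mul √k)).const_mul √k
  rw [htnk]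
  refine htan.congr_deriv ?_
  simp only [tan_eq_sin_div_cos]
  field_simp
  rw [sq_sqrt hk.le]
  linear_combination (-k) * sin_sq_add_cos_sq (√k * s)

theorem cos_sqrt_mul_ne_zero_of_mem_Ioo {k D s : ℝ} (hk : 0 ≤ k) (hDk : 0 < k → D < π / √k)
    (hs : s ∈ Ioo (-(D / 2)) (D / 2)) : cos (√k * s) ≠ 0 := by
  rcases hk.eq_or_lt with rfl | hk
  · simp
  have hsk : 0 < √k := sqrt_pos.2 hk
  have hD : √k * D < π := by have := hDk hk; rwa [lt_div_iff₀ hsk, mul_comm] at this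
  refine (cos_pos_of_mem_Ioo ⟨?_, ?_⟩).ne' <;> nlinarith [hs.1, hs.2]

section LogDeriv

variable {𝕜 : Type*} [NontriviallyNormedField 𝕜] {f : 𝕜 → 𝕜} {x : 𝕜}

theorem hasDerivAt_logDeriv (hf : DifferentiableAt 𝕜 f x)
    (hf' : DifferentiableAt 𝕜 (deriv f) x) (hx : f x ≠ 0) :
    HasDerivAt (logDeriv f) (deriv (deriv f) x / f x - logDeriv f x ^ 2) x := by
  refine (hf'.hasDerivAt.div hf.hasDerivAt hx).congr_deriv ?_
  rw [logDeriv_apply]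
  field_simp

theorem hasDerivAt_logDeriv_of_deriv_deriv_eq {a q : 𝕜}
    (hf : DifferentiableAt 𝕜 f x) (hf' : DifferentiableAt 𝕜 (deriv f) x) (hx : f x ≠ 0)
    (hode : deriv (deriv f) x = a * deriv f x + q * f x) :
    HasDerivAt (logDeriv f) (a * logDeriv f x + q - logDeriv f x ^ 2) x := by
  refine (hasDerivAt_logDeriv hf hf' hx).congr_deriv ?_
  rw [hode, logDeriv_apply]
  field_simp

end LogDeriv

theorem riccati_identity_one_dim_model_general
    (n : ℕ) (k : ℝ) (hk : 0 ≤ k)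
    (D : ℝ) (hDk : 0 < k → D < Real.pi / Real.sqrt k)
    (Vt : ℝ → ℝ)
    (hVt : ∀ s ∈ Set.Ioo (-(D / 2)) (D / 2), DifferentiableAt ℝ Vt s)
    (lamb₁ : ℝ) (φ : ℝ → ℝ)
    (hφpos : ∀ s ∈ Set.Ioo (-(D / 2)) (D / 2), 0 < φ s)
    (hφ1 : ∀ s ∈ Set.Ioo (-(D / 2)) (D / 2), DifferentiableAt ℝ φ s)
    (hφ2 : ∀ s ∈ Set.Ioo (-(D / 2)) (D / 2), DifferentiableAt ℝ (deriv φ) s)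
    (hode : ∀ s ∈ Set.Ioo (-(D / 2)) (D / 2),
      -(deriv (deriv φ) s) + ((n : ℝ) - 1) * tnk k s * deriv φ s + Vt s * φ s
        = lamb₁ * φ s) :
    ∀ s ∈ Set.Ioo (-(D / 2)) (D / 2),
      deriv (deriv (fun r => deriv φ r / φ r)) s
        + 2 * deriv (fun r => deriv φ r / φ r) s * (deriv φ s / φ s)
        - tnk k s * (((n : ℝ) + 1) * deriv (fun r => deriv φ r / φ r) s
            + 2 * lamb₁ + 2 * (deriv φ s / φ s) ^ 2 - 2 * Vt s)
        - deriv Vt s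
        - ((n : ℝ) - 1) * (k - tnk k s ^ 2) * (deriv φ s / φ s) = 0 := by
  intro s hs
  set Ψ := logDeriv φ
  have riccati : ∀ r ∈ Ioo (-(D / 2)) (D / 2),
      HasDerivAt Ψ (((n : ℝ) - 1) * tnk k r * Ψ r + (Vt r - lamb₁) - Ψ r ^ 2) r :=
    fun r hr => hasDerivAt_logDeriv_of_deriv_deriv_eq (hφ1 r hr) (hφ2 r hr)
      (hφpos r hr).ne' (by linear_combination -hode r hr)
  have hΨ' : deriv Ψ =ᶠ[𝓝 s]
      fun r => ((n : ℝ) - 1) * tnk k r * Ψ r + (Vt r - lamb₁) - Ψ r ^ 2 :=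
    eventually_of_mem (isOpen_Ioo.mem_nhds hs) fun r hr => (riccati r hr).deriv
  have htnk := hasDerivAt_tnk hk (cos_sqrt_mul_ne_zero_of_mem_Ioo hk hDk hs)
  have hΨ'' := (((htnk.const_mul ((n : ℝ) - 1)).mul (riccati s hs)).add
    ((hVt s hs).hasDerivAt.sub_const lamb₁)).sub ((riccati s hs).pow 2)
  rw [show (fun r => deriv φ r / φ r) = Ψ from rfl, ← logDeriv_apply,
    hΨ'.deriv_eq.trans hΨ''.deriv, (riccati s hs).deriv]
  ring

/-- The Riccati-type identity (equation (4.5)) satisfied by `Ψ = (log φ)' = φ'/φ` for a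
positive solution `φ` of the one-dimensional model eigenvalue equation
`−φ'' + (n−1) tn_k φ' + Ṽ φ = λ̄₁ φ` on `(−D/2, D/2)`. -/
theorem riccati_identity_one_dim_model
    (n : ℕ) (hn : 1 ≤ n) (k : ℝ) (hk : 0 ≤ k)
    (D : ℝ) (hD : 0 < D) (hDk : 0 < k → D < Real.pi / Real.sqrt k)
    (Vt : ℝ → ℝ)
    (hVt : ∀ s ∈ Set.Ioo (-(D / 2)) (D / 2), DifferentiableAt ℝ Vt s)
    (lamb₁ : ℝ) (φ : ℝ → ℝ)
    (hφpos : ∀ s ∈ Set.Ioo (-(D / 2)) (D / 2), 0 < φ s)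
    (hφ1 : ∀ s ∈ Set.Ioo (-(D / 2)) (D / 2), DifferentiableAt ℝ φ s)
    (hφ2 : ∀ s ∈ Set.Ioo (-(D / 2)) (D / 2), DifferentiableAt ℝ (deriv φ) s)
    (hφ3 : ∀ s ∈ Set.Ioo (-(D / 2)) (D / 2), DifferentiableAt ℝ (deriv (deriv φ)) s)
    (hode : ∀ s ∈ Set.Ioo (-(D / 2)) (D / 2),
      -(deriv (deriv φ) s) + ((n : ℝ) - 1) * tnk k s * deriv φ s + Vt s * φ s
        = lamb₁ * φ s) :
    ∀ s ∈ Set.Ioo (-(D / 2)) (D / 2),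
      deriv (deriv (fun r => deriv φ r / φ r)) s
        + 2 * deriv (fun r => deriv φ r / φ r) s * (deriv φ s / φ s)
        - tnk k s * (((n : ℝ) + 1) * deriv (fun r => deriv φ r / φ r) s
            + 2 * lamb₁ + 2 * (deriv φ s / φ s) ^ 2 - 2 * Vt s)
        - deriv Vt s
        - ((n : ℝ) - 1) * (k - tnk k s ^ 2) * (deriv φ s / φ s) = 0 :=
  riccati_identity_one_dim_model_general n k hk D hDk Vt hVt lamb₁ φ hφpos hφ1 hφ2 hode
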